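/- For every integer d > 2, A_d ≤ A_{d+1}. -/

import Mathlib

open scoped BigOperators

/-- The largest `k` such that `C(k,t) ≤ a` (used in the greedy binomial expansion). -/
def maxBinomIdx (a t : ℕ) : ℕ :=
  ((Finset.range (a + t + 1)).filter fun k => Nat.choose k t ≤ a).sup id

/-- `a^{⟨t⟩}`, computed via the (unique, hence greedy) binomial expansion of `a` in base `t`:
if `a = C(k_t,t) + C(k_{t-1},t-1) + ⋯ + C(k_j,j)` with `k_t > ⋯ > k_j ≥ j ≥ 1`, then
`a^{⟨t⟩} = C(k_t+1,t+1) + ⋯ + C(k_j+1,j+1)`; by convention `0^{⟨t⟩} = 0`. -/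
def macaulay : ℕ → ℕ → ℕ
  | _, 0 => 0
  | a, t + 1 =>
    if a = 0 then 0
    else
      Nat.choose (maxBinomIdx a (t + 1) + 1) (t + 2) +
        macaulay (a - Nat.choose (maxBinomIdx a (t + 1)) (t + 1)) t

/-- A finite O-sequence: `h 0 = 1`, `h` vanishes after its first zero, `h` is eventually zero,
and `h (t+1) ≤ (h t)^{⟨t⟩}` for every `t ≥ 1`. -/
def IsFiniteOSeq (h : ℕ → ℕ) : Prop :=
  h 0 = 1 ∧ (∀ t, h t = 0 → h (t + 1) = 0) ∧ (∃ N, ∀ t, N ≤ t → h t = 0) ∧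
    ∀ t, 1 ≤ t → h (t + 1) ≤ macaulay (h t) t

/-- The multiplicity (length) `d = Σ_t h t` of a finite O-sequence. -/
noncomputable def mult (h : ℕ → ℕ) : ℕ := ∑ᶠ t, h t

/-- The socle degree `s = max {t : h t ≠ 0}` of a finite O-sequence. -/
noncomputable def socleDeg (h : ℕ → ℕ) : ℕ := sSup {t | h t ≠ 0}

/-- `countO p n k d = O(p,n,k,d)`: for `p ≥ 1`, `n ≥ 0`, `k ≥ 0`, `d ≥ 1`, the number of finite
O-sequences `h` of multiplicity `d` and socle degree at most `n` with `h i = C(p-1+i,i)` for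
`0 ≤ i ≤ k` and `h i < C(p-1+i,i)` for `i > k`; moreover `O(0,n,0,1) = 1` for `n ≥ 0`,
`O(0,n,k,d) = 0` for `k > 0` or `d > 1`, and `O(p,n,k,d) = 0` if `p < 0`, `n < 0`, `k < 0`
or `d ≤ 0`. -/
noncomputable def countO (p n k d : ℤ) : ℕ :=
  if 1 ≤ p ∧ 0 ≤ n ∧ 0 ≤ k ∧ 1 ≤ d then
    {h : ℕ → ℕ | IsFiniteOSeq h ∧ mult h = d.toNat ∧ socleDeg h ≤ n.toNat ∧
        (∀ i : ℕ, (i : ℤ) ≤ k → h i = Nat.choose (p.toNat - 1 + i) i) ∧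
        (∀ i : ℕ, k < (i : ℤ) → h i < Nat.choose (p.toNat - 1 + i) i)}.ncard
  else if p = 0 ∧ 0 ≤ n ∧ k = 0 ∧ d = 1 then 1
  else 0

/-- `O_d`: the number of finite O-sequences of multiplicity `d`. -/
noncomputable def countOd (d : ℕ) : ℕ :=
  {h : ℕ → ℕ | IsFiniteOSeq h ∧ mult h = d}.ncard

/-- `A_d`: the number of finite O-sequences of multiplicity `d` whose value at the socle degree
is at least `2`. -/
noncomputable def countAd (d : ℕ) : ℕ :=
  {h : ℕ → ℕ | IsFiniteOSeq h ∧ mult h = d ∧ 2 ≤ h (socleDeg h)}.ncard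

lemma maxBinomIdx_one (a : ℕ) : maxBinomIdx a 1 = a := by
  unfold maxBinomIdx
  apply le_antisymm
  · apply Finset.sup_le
    intro k hk
    simp only [Finset.mem_filter, Nat.choose_one_right] at hk
    exact hk.2
  · apply Finset.le_sup (f := id)
    simp [Nat.choose_one_right]

lemma macaulay_one (a : ℕ) (ha : a ≠ 0) : macaulay a 1 = (a + 1).choose 2 := by
  rw [show (1 : ℕ) = 0 + 1 from rfl, macaulay, if_neg ha, maxBinomIdx_one]
  simp [macaulay, Nat.choose_one_right]

lemma macaulay_one_mono (a : ℕ) : macaulay a 1 ≤ macaulay (a + 1) 1 := by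
  rcases Nat.eq_zero_or_pos a with h | h
  · subst h; show macaulay 0 1 ≤ _; rw [show (1:ℕ) = 0+1 from rfl, macaulay]; simp
  · rw [macaulay_one a (by omega), macaulay_one (a+1) (by omega)]
    exact Nat.choose_le_choose 2 (by omega)

lemma supp_finite {h : ℕ → ℕ} (hO : IsFiniteOSeq h) : (Function.support h).Finite := by
  obtain ⟨N, hN⟩ := hO.2.2.1
  apply Set.Finite.subset (Set.finite_Iio N)
  intro t ht
  simp only [Set.mem_Iio]
  by_contra hc
  exact ht (hN t (by omega))

lemma val_le_mult {h : ℕ → ℕ} (hO : IsFiniteOSeq h) (t : ℕ) : h t ≤ mult h :=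
  single_le_finsum t (supp_finite hO) (fun _ => Nat.zero_le _)

lemma pos_of_pos {h : ℕ → ℕ} (hO : IsFiniteOSeq h) :
    ∀ t, h t ≠ 0 → ∀ i ≤ t, 1 ≤ h i := by
  intro t
  induction t with
  | zero => intro ht i hi; interval_cases i; omega
  | succ n ih =>
    intro ht i hi
    have hn : h n ≠ 0 := fun hz => ht (hO.2.1 n hz)
    rcases Nat.lt_or_ge i (n+1) with h1 | h1
    · exact ih hn i (by omega)
    · have : i = n + 1 := by omega
      subst this; omega

lemma vanish {h : ℕ → ℕ} (hO : IsFiniteOSeq h) (t : ℕ) (ht : mult h ≤ t) : h t = 0 := by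
  by_contra hc
  have hpos := pos_of_pos hO t hc
  obtain ⟨N, hN⟩ := hO.2.2.1
  have hsum : ∑ i ∈ Finset.range (t + 1), h i ≤ mult h := by
    have heq : mult h = ∑ i ∈ Finset.range (max (t + 1) N), h i := by
      apply finsum_eq_sum_of_support_subset
      intro x hx
      simp only [Function.mem_support] at hx
      simp only [Finset.coe_range, Set.mem_Iio]
      by_contra hc
      exact hx (hN x (by omega))
    rw [heq]
    apply Finset.sum_le_sum_of_subset
    intro x hx
    simp only [Finset.mem_range] at *
    omega
  have : t + 1 ≤ ∑ i ∈ Finset.range (t + 1), h i := by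
    calc t + 1 = ∑ _i ∈ Finset.range (t + 1), 1 := by simp
    _ ≤ _ := Finset.sum_le_sum (fun i hi => hpos i (by simpa using Nat.lt_succ_iff.mp (Finset.mem_range.mp hi)))
  omega

lemma Sfin (m : ℕ) : {h : ℕ → ℕ | IsFiniteOSeq h ∧ mult h = m}.Finite := by
  set F : (ℕ → ℕ) → (Fin m → Fin (m + 1)) := fun h i =>
    ⟨min (h i) m, by omega⟩ with hF
  apply Set.Finite.of_finite_image (f := F) (Set.toFinite _)
  intro h hh h' hh' heq
  funext t
  rcases Nat.lt_or_ge t m with hlt | hge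
  · have := congrFun heq ⟨t, hlt⟩
    simp only [hF, Fin.mk.injEq] at this
    have h1 : h t ≤ m := hh.2 ▸ val_le_mult hh.1 t
    have h2 : h' t ≤ m := hh'.2 ▸ val_le_mult hh'.1 t
    omega
  · rw [vanish hh.1 t (hh.2 ▸ hge), vanish hh'.1 t (hh'.2 ▸ hge)]

lemma mult_one_of_h1 {h : ℕ → ℕ} (hO : IsFiniteOSeq h) (h1 : h 1 = 0) : mult h = 1 := by
  have hz : ∀ t, 1 ≤ t → h t = 0 := by
    intro t ht
    induction t with
    | zero => omega
    | succ n ih =>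
      rcases Nat.eq_zero_or_pos n with hn | hn
      · subst hn; exact h1
      · exact hO.2.1 n (ih hn)
  have : mult h = h 0 := finsum_eq_single h 0 (fun b hb => hz b (by omega))
  rw [this, hO.1]

theorem stmt13' (d : ℕ) (hd : 2 < d) :
    {h : ℕ → ℕ | IsFiniteOSeq h ∧ mult h = d ∧ 2 ≤ h (socleDeg h)}.ncard ≤
    {h : ℕ → ℕ | IsFiniteOSeq h ∧ mult h = d + 1 ∧ 2 ≤ h (socleDeg h)}.ncard := by
  set f : (ℕ → ℕ) → (ℕ → ℕ) := fun h t => h t + if t = 1 then 1 else 0 with hf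
  refine Set.ncard_le_ncard_of_injOn f ?_ ?_
    (Set.Finite.subset (Sfin (d + 1)) (fun h hh => ⟨hh.1, hh.2.1⟩))
  · rintro h ⟨hO, hm, hs⟩
    obtain ⟨h0, hprop, ⟨N, hN⟩, hmac⟩ := hO
    have hO' : IsFiniteOSeq h := ⟨h0, hprop, ⟨N, hN⟩, hmac⟩
    have hfO : IsFiniteOSeq (f h) := by
      refine ⟨by simp [hf, h0], ?_, ⟨max N 2, ?_⟩, ?_⟩
      · intro t ht
        match t with
        | 0 => simp [hf, h0] at ht
        | 1 => simp [hf] at ht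
        | (n+2) =>
          simp only [hf] at ht ⊢
          simp only [show n + 2 ≠ 1 by omega, if_neg, show n + 3 ≠ 1 by omega] at *
          simpa using hprop (n+2) (by simpa using ht)
      · intro t ht
        simp only [hf, show t ≠ 1 by omega, if_neg]
        simpa using hN t (by omega)
      · intro t ht
        rcases Nat.eq_or_lt_of_le ht with h1 | h1
        · subst h1
          simp only [hf]
          norm_num
          calc h 2 ≤ macaulay (h 1) 1 := hmac 1 le_rfl
          _ ≤ macaulay (h 1 + 1) 1 := macaulay_one_mono _
        · have ht1 : t ≠ 1 := by omega
          have ht2 : t + 1 ≠ 1 := by omega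
          simp only [hf, if_neg ht1, if_neg ht2]
          simpa using hmac t ht
    have h1ne : h 1 ≠ 0 := by
      intro hz
      have := mult_one_of_h1 hO' hz
      omega
    have hsetsame : {t | f h t ≠ 0} = {t | h t ≠ 0} := by
      ext t
      rcases eq_or_ne t 1 with rfl | ht
      · simp [hf, h1ne]
      · simp only [hf, Set.mem_setOf_eq, if_neg ht, add_zero]
    have hsocle : socleDeg (f h) = socleDeg h := by
      unfold socleDeg; rw [hsetsame]
    have hmult : mult (f h) = d + 1 := by
      have hd1 : ∑ᶠ t : ℕ, (if t = 1 then 1 else 0 : ℕ) = 1 := by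
        rw [finsum_eq_single _ 1 (fun b hb => by simp [hb])]; simp
      have : mult (f h) = mult h + ∑ᶠ t : ℕ, (if t = 1 then 1 else 0 : ℕ) := by
        unfold mult
        rw [← finsum_add_distrib (supp_finite hO')]
        apply Set.Finite.subset (Set.finite_singleton 1)
        intro t ht
        simp only [Function.mem_support] at ht
        by_contra hc
        simp at hc
        simp [hc] at ht
      rw [this, hd1, hm]
    refine ⟨hfO, hmult, ?_⟩
    rw [hsocle]
    calc 2 ≤ h (socleDeg h) := hs
    _ ≤ f h (socleDeg h) := by simp [hf]
  · intro h _ h' _ heq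
    funext t
    have := congrFun heq t
    simp only [hf] at this
    omega

/-- For every integer `d > 2`, `A_d ≤ A_{d+1}`. -/
theorem stmt13 (d : ℕ) (hd : 2 < d) : countAd d ≤ countAd (d + 1) := by
  unfold countAd; exact stmt13' d hd
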